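/- Let S : [0,1] → GL_m(ℂ) be a continuous loop of invertible matrices with S(0) = S(1), m ≥ 1. If m does not divide the winding number of det S(τ) about the origin, then there exists τ₀ ∈ [0,1] such that 0 ∈ W(S(τ₀)), i.e., x† S(τ₀) x = 0 for some unit vector x. -/

import Mathlib

open Matrix Set

/-- The numerical range of a complex `m × m` matrix. -/
def numRange {m : ℕ} (A : Matrix (Fin m) (Fin m) ℂ) : Set ℂ :=
  {z | ∃ x : Fin m → ℂ, star x ⬝ᵥ x = 1 ∧ star x ⬝ᵥ A.mulVec x = z}

namespace ZeroWindAux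
open Complex
variable {m : ℕ}

lemma stardot (v : Fin m → ℂ) :
    star v ⬝ᵥ v = ((∑ i, Complex.normSq (v i) : ℝ) : ℂ) := by
  simp [dotProduct, Complex.normSq_eq_conj_mul_self, Complex.ofReal_sum]

lemma stardot_conj (x y : Fin m → ℂ) :
    star x ⬝ᵥ y = (starRingEnd ℂ) (star y ⬝ᵥ x) := by
  simp [dotProduct, map_sum, mul_comm]

lemma expand (M : Matrix (Fin m) (Fin m) ℂ) (x y : Fin m → ℂ) (a b : ℂ) :
    star (a • x + b • y) ⬝ᵥ M.mulVec (a • x + b • y)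
      = (starRingEnd ℂ) a * a * (star x ⬝ᵥ M.mulVec x)
        + (starRingEnd ℂ) a * b * (star x ⬝ᵥ M.mulVec y)
        + (starRingEnd ℂ) b * a * (star y ⬝ᵥ M.mulVec x)
        + (starRingEnd ℂ) b * b * (star y ⬝ᵥ M.mulVec y) := by
  simp only [star_add, star_smul, Matrix.mulVec_add, Matrix.mulVec_smul,
    add_dotProduct, dotProduct_add, smul_dotProduct,
    dotProduct_smul, smul_eq_mul, Complex.star_def]
  ring

lemma expand_self (x y : Fin m → ℂ) (a b : ℂ) :
    star (a • x + b • y) ⬝ᵥ (a • x + b • y)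
      = (starRingEnd ℂ) a * a * (star x ⬝ᵥ x)
        + (starRingEnd ℂ) a * b * (star x ⬝ᵥ y)
        + (starRingEnd ℂ) b * a * (star y ⬝ᵥ x)
        + (starRingEnd ℂ) b * b * (star y ⬝ᵥ y) := by
  have := expand (1 : Matrix (Fin m) (Fin m) ℂ) x y a b
  simpa [Matrix.one_mulVec] using this

lemma smul_stardot (M : Matrix (Fin m) (Fin m) ℂ) (w : Fin m → ℂ) (a : ℂ) :
    star (a • w) ⬝ᵥ M.mulVec (a • w) = (starRingEnd ℂ) a * a * (star w ⬝ᵥ M.mulVec w) := by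
  simp only [star_smul, Matrix.mulVec_smul, smul_dotProduct, dotProduct_smul,
    smul_eq_mul, Complex.star_def]
  ring

lemma smul_stardot_self (w : Fin m → ℂ) (a : ℂ) :
    star (a • w) ⬝ᵥ (a • w) = (starRingEnd ℂ) a * a * (star w ⬝ᵥ w) := by
  have := smul_stardot (1 : Matrix (Fin m) (Fin m) ℂ) w a
  simpa [Matrix.one_mulVec] using this

lemma stardot_nonneg_real (v : Fin m → ℂ) :
    ∃ r : ℝ, 0 ≤ r ∧ star v ⬝ᵥ v = (r : ℂ) ∧ (r = 0 → v = 0) := by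
  refine ⟨∑ i, Complex.normSq (v i), Finset.sum_nonneg fun i _ => Complex.normSq_nonneg _,
    stardot v, fun h => ?_⟩
  have := (Finset.sum_eq_zero_iff_of_nonneg (fun i _ => Complex.normSq_nonneg (v i))).1 h
  funext i
  exact Complex.normSq_eq_zero.1 (this i (Finset.mem_univ i))

/-- Toeplitz–Hausdorff core: values of the quadratic form on the unit sphere
between a point where it is `1` and a point where it is `0` fill `[0,1]`. -/
lemma key_ivt (B : Matrix (Fin m) (Fin m) ℂ) (x y : Fin m → ℂ)
    (hx : star x ⬝ᵥ x = 1) (hy : star y ⬝ᵥ y = 1)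
    (hBx : star x ⬝ᵥ B.mulVec x = 1) (hBy : star y ⬝ᵥ B.mulVec y = 0)
    {t : ℝ} (ht : t ∈ Icc (0:ℝ) 1) :
    ∃ v : Fin m → ℂ, star v ⬝ᵥ v = 1 ∧ star v ⬝ᵥ B.mulVec v = (t : ℂ) := by
  classical
  set p : ℂ := star y ⬝ᵥ B.mulVec x with hp
  set q : ℂ := star x ⬝ᵥ B.mulVec y with hq
  set r : ℂ := p - (starRingEnd ℂ) q with hr
  set u : ℂ := if r = 0 then 1 else r / ‖r‖ with hu
  have hu1 : (starRingEnd ℂ) u * u = 1 := by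
    by_cases h : r = 0
    · simp [hu, h]
    · have habs : (‖r‖ : ℝ) ≠ 0 := norm_ne_zero_iff.mpr h
      simp only [hu, if_neg h, map_div₀, Complex.conj_ofReal]
      rw [div_mul_div_comm, ← Complex.normSq_eq_conj_mul_self, Complex.normSq_eq_norm_sq]
      push_cast
      rw [pow_two]
      exact div_self (mul_ne_zero (Complex.ofReal_ne_zero.2 habs) (Complex.ofReal_ne_zero.2 habs))
  have hur : ((starRingEnd ℂ) u * r).im = 0 := by
    by_cases h : r = 0
    · rw [h, mul_zero]; rfl
    · rw [hu, if_neg h, map_div₀, Complex.conj_ofReal, div_mul_eq_mul_div,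
        ← Complex.normSq_eq_conj_mul_self, ← Complex.ofReal_div]
      exact Complex.ofReal_im _
  -- the combination conj u * p + u * q is real
  have hreal : ((starRingEnd ℂ) u * p + u * q).im = 0 := by
    have h2 := hur
    rw [hr, mul_sub] at h2
    simp only [Complex.sub_im, Complex.add_im, Complex.mul_im, Complex.conj_re,
      Complex.conj_im, Complex.sub_re, Complex.mul_re, Complex.neg_im, Complex.neg_re] at h2 ⊢
    ring_nf at h2 ⊢
    linarith
  set c0 : ℝ := ((starRingEnd ℂ) u * p + u * q).re with hc0
  have hc0eq : (starRingEnd ℂ) u * p + u * q = (c0 : ℂ) :=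
    Complex.ext rfl (by simpa using hreal)
  set α : ℂ := star (u • y) ⬝ᵥ x with hα
  set cα : ℝ := (α + (starRingEnd ℂ) α).re with hcα
  have hcαeq : α + (starRingEnd ℂ) α = (cα : ℂ) :=
    Complex.ext rfl (by simp [Complex.add_im, Complex.conj_im])
  -- the path of (unnormalized) vectors
  set v : ℝ → (Fin m → ℂ) := fun θ => ((1 - θ : ℝ) : ℂ) • (u • y) + (θ : ℂ) • x with hv
  have huy1 : star (u • y) ⬝ᵥ (u • y) = 1 := by
    rw [smul_stardot_self, hy]; simpa using hu1
  have huyB : star (u • y) ⬝ᵥ B.mulVec (u • y) = 0 := by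
    rw [smul_stardot, hBy]; ring
  have huyBx : star (u • y) ⬝ᵥ B.mulVec x = (starRingEnd ℂ) u * p := by
    simp [star_smul, smul_dotProduct, Complex.star_def, hp]
  have hxBuy : star x ⬝ᵥ B.mulVec (u • y) = u * q := by
    simp [Matrix.mulVec_smul, dotProduct_smul, hq]
  have hxuy : star x ⬝ᵥ (u • y) = (starRingEnd ℂ) α := by
    rw [hα, stardot_conj]
  set N : ℝ → ℝ := fun θ => (1 - θ)^2 + θ^2 + θ * (1 - θ) * cα with hN
  set Num : ℝ → ℝ := fun θ => θ^2 + θ * (1 - θ) * c0 with hNum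
  have hNeq : ∀ θ : ℝ, star (v θ) ⬝ᵥ (v θ) = ((N θ : ℝ) : ℂ) := by
    intro θ
    rw [hv]
    rw [expand_self (u • y) x ((1 - θ : ℝ) : ℂ) ((θ : ℝ) : ℂ)]
    rw [huy1, ← hα, hxuy, hx]
    simp only [Complex.conj_ofReal]
    have : ((1-θ:ℝ):ℂ) * ((1-θ:ℝ):ℂ) * 1 + ((1-θ:ℝ):ℂ) * (θ:ℂ) * α
        + (θ:ℂ) * ((1-θ:ℝ):ℂ) * (starRingEnd ℂ) α + (θ:ℂ) * (θ:ℂ) * 1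
        = ((1-θ:ℝ):ℂ)^2 + (θ:ℂ)^2 + (θ:ℂ) * ((1-θ:ℝ):ℂ) * (α + (starRingEnd ℂ) α) := by
      ring
    rw [this, hcαeq]
    simp only [hN]
    push_cast
    ring
  have hNumeq : ∀ θ : ℝ, star (v θ) ⬝ᵥ B.mulVec (v θ) = ((Num θ : ℝ) : ℂ) := by
    intro θ
    rw [hv]
    rw [expand B (u • y) x ((1 - θ : ℝ) : ℂ) ((θ : ℝ) : ℂ)]
    rw [huyB, huyBx, hxBuy, hBx]
    simp only [Complex.conj_ofReal]
    have : ((1-θ:ℝ):ℂ) * ((1-θ:ℝ):ℂ) * 0 + ((1-θ:ℝ):ℂ) * (θ:ℂ) * ((starRingEnd ℂ) u * p)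
        + (θ:ℂ) * ((1-θ:ℝ):ℂ) * (u * q) + (θ:ℂ) * (θ:ℂ) * 1
        = (θ:ℂ)^2 + (θ:ℂ) * ((1-θ:ℝ):ℂ) * ((starRingEnd ℂ) u * p + u * q) := by
      ring
    rw [this, hc0eq]
    simp only [hNum]
    push_cast
    ring
  -- positivity of N on ℝ
  have hNpos : ∀ θ : ℝ, 0 < N θ := by
    intro θ
    obtain ⟨rr, hrr0, hrreq, hrrzero⟩ := stardot_nonneg_real (v θ)
    have : (rr : ℂ) = ((N θ : ℝ) : ℂ) := by rw [← hrreq, hNeq]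
    have hrN : rr = N θ := by exact_mod_cast this
    rcases lt_or_eq_of_le hrr0 with h | h
    · linarith [hrN ▸ h]
    · exfalso
      have hv0 : v θ = 0 := hrrzero h.symm
      -- derive θ = 1/2 and x = -(u • y)
      have heq : ((1 - θ : ℝ) : ℂ) • (u • y) = -((θ : ℝ) : ℂ) • x := by
        have := hv0
        rw [hv] at this
        simp only at this
        have h2 : ((1 - θ : ℝ) : ℂ) • (u • y) + ((θ:ℝ) : ℂ) • x = 0 := this
        rw [neg_smul]
        linear_combination (norm := module) h2
      have hnorm : ((1 - θ)^2 : ℝ) = θ^2 := by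
        have h1 : star (((1 - θ : ℝ) : ℂ) • (u • y)) ⬝ᵥ (((1 - θ : ℝ) : ℂ) • (u • y))
            = (((1-θ)^2 : ℝ) : ℂ) := by
          rw [smul_stardot_self, huy1, Complex.conj_ofReal]
          push_cast; ring
        have h2 : star ((-((θ : ℝ) : ℂ)) • x) ⬝ᵥ ((-((θ : ℝ) : ℂ)) • x) = ((θ^2 : ℝ) : ℂ) := by
          rw [smul_stardot_self, hx]
          simp only [map_neg, Complex.conj_ofReal]
          push_cast; ring
        have := h1
        rw [heq] at this
        rw [h2] at this
        exact_mod_cast this.symm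
      have hθ : θ = 1/2 := by nlinarith
      have hxe : x = -(u • y) := by
        funext i
        have h2 := congrFun hv0 i
        simp only [hv, Pi.add_apply, Pi.smul_apply, smul_eq_mul, Pi.zero_apply] at h2
        rw [hθ] at h2
        push_cast at h2
        simp only [Pi.neg_apply, Pi.smul_apply, smul_eq_mul]
        linear_combination 2 * h2
      have : (1 : ℂ) = 0 := by
        rw [← hBx, hxe]
        have hneg : -(u • y) = ((-1 : ℂ)) • (u • y) := (neg_one_smul ℂ _).symm
        rw [hneg, smul_stardot, huyB]
        ring
      exact one_ne_zero this
  -- IVT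
  set f : ℝ → ℝ := fun θ => Num θ / N θ with hf
  have hfc : ContinuousOn f (Icc 0 1) := by
    apply ContinuousOn.div
    · fun_prop
    · fun_prop
    · intro θ _; exact (hNpos θ).ne'
  have hf0 : f 0 = 0 := by norm_num [hf, hNum]
  have hf1 : f 1 = 1 := by norm_num [hf, hNum, hN]
  have hsub : Icc (f 0) (f 1) ⊆ f '' Icc 0 1 := intermediate_value_Icc zero_le_one hfc
  obtain ⟨θ, hθI, hfθ⟩ := hsub (by rw [hf0, hf1]; exact ht)
  -- normalize
  have hNθ := hNpos θ
  set s : ℝ := (Real.sqrt (N θ))⁻¹ with hs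
  have hsq : s^2 * N θ = 1 := by
    rw [hs, inv_pow, Real.sq_sqrt hNθ.le]
    exact inv_mul_cancel₀ hNθ.ne'
  refine ⟨((s : ℝ) : ℂ) • v θ, ?_, ?_⟩
  · rw [smul_stardot_self, hNeq, Complex.conj_ofReal, ← Complex.ofReal_mul,
      ← Complex.ofReal_mul]
    rw [show s * s * N θ = s ^ 2 * N θ by ring, hsq]
    norm_num
  · rw [smul_stardot, hNumeq, Complex.conj_ofReal, ← Complex.ofReal_mul,
      ← Complex.ofReal_mul]
    have hNumfN : Num θ = f θ * N θ := by
      rw [hf]; field_simp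
    rw [hNumfN, show s * s * (f θ * N θ) = s ^ 2 * N θ * f θ by ring, hsq, one_mul, hfθ]
/-- Toeplitz–Hausdorff: the segment between two points of the numerical range
stays in the numerical range; here the special case needed: if a convex
combination of two values is zero, then `0` is in the numerical range. -/
lemma segment_zero (A : Matrix (Fin m) (Fin m) ℂ) {a b : ℂ}
    (ha : a ∈ numRange A) (hb : b ∈ numRange A) {s : ℝ} (hs : s ∈ Icc (0:ℝ) 1)
    (hzero : (1 - (s:ℂ)) * a + (s:ℂ) * b = 0) : (0:ℂ) ∈ numRange A := by
  rcases eq_or_ne a b with rfl | hab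
  · have : a = 0 := by linear_combination hzero
    exact this ▸ ha
  · obtain ⟨x, hx1, hxA⟩ := ha
    obtain ⟨y, hy1, hyA⟩ := hb
    have hab' : a - b ≠ 0 := sub_ne_zero.2 hab
    set B : Matrix (Fin m) (Fin m) ℂ := (a - b)⁻¹ • (A - b • 1) with hB
    have hBx : star x ⬝ᵥ B.mulVec x = 1 := by
      rw [hB, Matrix.smul_mulVec, dotProduct_smul, Matrix.sub_mulVec,
        dotProduct_sub, hxA, Matrix.smul_mulVec, Matrix.one_mulVec,
        dotProduct_smul, hx1]
      simp only [smul_eq_mul, mul_one]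
      exact inv_mul_cancel₀ hab'
    have hBy : star y ⬝ᵥ B.mulVec y = 0 := by
      rw [hB, Matrix.smul_mulVec, dotProduct_smul, Matrix.sub_mulVec,
        dotProduct_sub, hyA, Matrix.smul_mulVec, Matrix.one_mulVec,
        dotProduct_smul, hy1]
      simp
    have hs' : (1 - s) ∈ Icc (0:ℝ) 1 := ⟨by linarith [hs.2], by linarith [hs.1]⟩
    obtain ⟨v, hv1, hvB⟩ := key_ivt B x y hx1 hy1 hBx hBy hs'
    refine ⟨v, hv1, ?_⟩
    have hA : A = (a - b) • B + b • 1 := by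
      rw [hB, smul_smul, mul_inv_cancel₀ hab', one_smul, sub_add_cancel]
    rw [hA, Matrix.add_mulVec, dotProduct_add, Matrix.smul_mulVec,
      dotProduct_smul, hvB, Matrix.smul_mulVec, Matrix.one_mulVec,
      dotProduct_smul, hv1]
    push_cast
    simp only [smul_eq_mul]
    linear_combination hzero

lemma prod_telescope (F : ℕ → ℂ) (n : ℕ) (hF : ∀ j ≤ n, F j ≠ 0) :
    ∏ j ∈ Finset.range n, (F (j+1) / F j) = F n / F 0 := by
  induction n with
  | zero => simp [div_self (hF 0 le_rfl)]
  | succ n ih =>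
    rw [Finset.prod_range_succ, ih (fun j hj => hF j (hj.trans (Nat.le_succ n)))]
    rw [div_mul_div_comm, mul_comm (F n), mul_div_mul_right _ _ (hF n (Nat.le_succ n))]

lemma ratio_slit {z w : ℂ} (hw : w ≠ 0) (hlt : ‖z - w‖ < ‖w‖) :
    z / w ∈ Complex.slitPlane ∧ z / w ≠ 0 := by
  have h1 : z / w = 1 + (z - w) / w := by field_simp; ring
  have h2 : ‖(z - w) / w‖ < 1 := by
    rw [norm_div]
    rw [div_lt_one (by simpa using (norm_pos_iff.mpr hw))]
    simpa using hlt
  refine ⟨h1 ▸ Complex.mem_slitPlane_of_norm_lt_one h2, ?_⟩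
  exact Complex.slitPlane_ne_zero (h1 ▸ Complex.mem_slitPlane_of_norm_lt_one h2)

lemma min_lip (τ x y : ℝ) (hxy : x ≤ y) : dist (min τ y) (min τ x) ≤ y - x := by
  rw [Real.dist_eq, abs_le]
  constructor
  · have h1 : min τ x ≤ min τ y := min_le_min le_rfl hxy
    linarith
  · rcases le_total τ x with h | h
    · rw [min_eq_left h, min_eq_left (h.trans hxy)]; linarith
    · have h2 : x ≤ min τ y := le_min h hxy
      have h3 : min τ x = x := min_eq_right h
      have h4 : min τ y ≤ y := min_le_right _ _
      rw [h3]; linarith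

lemma endpoint_eq (f : ℝ → ℂ) (hf : ContinuousOn f (Icc 0 1))
    (h1 : ∀ τ ∈ Icc (0:ℝ) 1, Complex.exp (f τ) = 1) : f 1 = f 0 := by
  have him : ∀ τ ∈ Icc (0:ℝ) 1, ∃ n : ℤ, f τ = (n : ℂ) * (2 * Real.pi * Complex.I) :=
    fun τ hτ => Complex.exp_eq_one_iff.1 (h1 τ hτ)
  set k : ℝ → ℝ := fun τ => (f τ).im / (2 * Real.pi) with hk
  have hkc : ContinuousOn k (Icc 0 1) :=
    (Complex.continuous_im.comp_continuousOn hf).div_const _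
  have hkint : ∀ τ ∈ Icc (0:ℝ) 1, ∃ n : ℤ, k τ = n := by
    intro τ hτ
    obtain ⟨n, hn⟩ := him τ hτ
    refine ⟨n, ?_⟩
    rw [hk]
    simp only
    rw [hn]
    have h2 : ((n:ℂ) * (2 * (Real.pi:ℂ) * Complex.I)).im = n * (2 * Real.pi) := by
      simp [Complex.mul_im]
      try ring
    rw [h2]
    have hpi : (2:ℝ) * Real.pi ≠ 0 := by positivity
    field_simp
  obtain ⟨n0, hn0⟩ := hkint 0 (left_mem_Icc.2 zero_le_one)
  obtain ⟨n1, hn1⟩ := hkint 1 (right_mem_Icc.2 zero_le_one)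
  have hk01 : k 1 = k 0 := by
    by_contra hne
    have hnne : n0 ≠ n1 := by rintro rfl; exact hne (hn1.trans hn0.symm)
    have parity : ∀ n2 n3 : ℤ, ((n2:ℝ) = (n3:ℝ) + 1/2) → False := by
      intro n2 n3 hh
      have : (2*n2 : ℝ) = 2*n3 + 1 := by linarith
      have : (2*n2 : ℤ) = 2*n3 + 1 := by exact_mod_cast this
      omega
    rcases hnne.lt_or_gt with h | h
    · have ht : ((n0:ℝ) + 1/2) ∈ Icc (k 0) (k 1) := by
        constructor
        · rw [hn0]; linarith
        · rw [hn1]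
          have : (n0:ℝ) + 1 ≤ n1 := by exact_mod_cast h
          linarith
      obtain ⟨τ, hτI, hτ⟩ := intermediate_value_Icc zero_le_one hkc ht
      obtain ⟨n2, hn2⟩ := hkint τ hτI
      rw [hn2] at hτ
      exact parity n2 n0 hτ
    · have ht : ((n1:ℝ) + 1/2) ∈ Icc (k 1) (k 0) := by
        constructor
        · rw [hn1]; linarith
        · rw [hn0]
          have : (n1:ℝ) + 1 ≤ n0 := by exact_mod_cast h
          linarith
      obtain ⟨τ, hτI, hτ⟩ := intermediate_value_Icc' zero_le_one hkc ht
      obtain ⟨n2, hn2⟩ := hkint τ hτI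
      rw [hn2] at hτ
      exact parity n2 n1 hτ
  have hre : ∀ τ ∈ Icc (0:ℝ) 1, (f τ).re = 0 := by
    intro τ hτ
    obtain ⟨n, hn⟩ := him τ hτ
    rw [hn]
    simp [Complex.mul_re]
  apply Complex.ext
  · rw [hre 1 (right_mem_Icc.2 zero_le_one), hre 0 (left_mem_Icc.2 zero_le_one)]
  · have hpi : (2:ℝ) * Real.pi ≠ 0 := by positivity
    rw [hk] at hk01
    simp only at hk01
    field_simp at hk01
    exact hk01

lemma exists_log_path (f : ℝ → ℂ) (hf : ContinuousOn f (Icc 0 1))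
    (hne : ∀ τ ∈ Icc (0:ℝ) 1, f τ ≠ 0) :
    ∃ L : ℝ → ℂ, ContinuousOn L (Icc 0 1) ∧ ∀ τ ∈ Icc (0:ℝ) 1, Complex.exp (L τ) = f τ := by
  have h0I : (0:ℝ) ∈ Icc (0:ℝ) 1 := left_mem_Icc.2 zero_le_one
  obtain ⟨τ₀, hτ₀I, hτ₀'⟩ := isCompact_Icc.exists_isMinOn ⟨0, h0I⟩
    (continuous_norm.comp_continuousOn hf)
  have hτ₀ : ∀ τ ∈ Icc (0:ℝ) 1, ‖f τ₀‖ ≤ ‖f τ‖ :=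
    fun τ hτ => hτ₀' hτ
  set ε : ℝ := ‖f τ₀‖ with hε
  have hεpos : 0 < ε := norm_pos_iff.mpr (hne τ₀ hτ₀I)
  obtain ⟨δ, hδpos, hδ⟩ := Metric.uniformContinuousOn_iff.1
    (isCompact_Icc.uniformContinuousOn_of_continuous hf) ε hεpos
  obtain ⟨n', hn'⟩ := exists_nat_one_div_lt hδpos
  obtain ⟨n, hnpos, hmesh⟩ : ∃ n : ℕ, 0 < (n:ℝ) ∧ 1 / (n:ℝ) < δ :=
    ⟨n' + 1, by positivity, by exact_mod_cast hn'⟩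
  set F : ℝ → ℕ → ℂ := fun τ j => f (min τ ((j:ℝ)/n)) with hF
  have hminI : ∀ τ ∈ Icc (0:ℝ) 1, ∀ j : ℕ, min τ ((j:ℝ)/n) ∈ Icc (0:ℝ) 1 := by
    intro τ hτ j
    exact ⟨le_min hτ.1 (by positivity), (min_le_left _ _).trans hτ.2⟩
  have hFne : ∀ τ ∈ Icc (0:ℝ) 1, ∀ j : ℕ, F τ j ≠ 0 := by
    intro τ hτ j
    exact hne _ (hminI τ hτ j)
  have hclose : ∀ τ ∈ Icc (0:ℝ) 1, ∀ j : ℕ,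
      ‖F τ (j+1) - F τ j‖ < ‖F τ j‖ := by
    intro τ hτ j
    have hxy : (j:ℝ)/n ≤ ((j:ℝ)+1)/n := by
      gcongr
      linarith
    have hlip := min_lip τ ((j:ℝ)/n) (((j:ℝ)+1)/n) hxy
    have hd : dist (min τ (((j:ℝ)+1)/n)) (min τ ((j:ℝ)/n)) < δ := by
      refine lt_of_le_of_lt (hlip.trans (le_of_eq ?_)) hmesh
      field_simp; ring
    have hmem1 := hminI τ hτ j
    have hmem2 : min τ (((j:ℝ)+1)/n) ∈ Icc (0:ℝ) 1 := by
      have h5 := hminI τ hτ (j+1)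
      push_cast at h5
      exact h5
    have hdist := hδ _ hmem2 _ hmem1 hd
    have h6 : ‖f (min τ (((j:ℝ)+1)/n)) - f (min τ ((j:ℝ)/n))‖ < ε := by
      rw [← Complex.dist_eq]; exact hdist
    have h7 : ε ≤ ‖f (min τ ((j:ℝ)/n))‖ := hτ₀ _ hmem1
    rw [hF]
    simp only
    push_cast
    linarith
  set L : ℝ → ℂ := fun τ =>
      Complex.log (f 0) + ∑ j ∈ Finset.range n, Complex.log (F τ (j+1) / F τ j) with hL
  refine ⟨L, ?_, ?_⟩
  · apply ContinuousOn.add continuousOn_const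
    apply continuousOn_finset_sum
    intro j _
    intro τ hτ
    have hcmin : ∀ i : ℕ, ContinuousWithinAt (fun τ' => F τ' i) (Icc 0 1) τ := by
      intro i
      rw [hF]
      simp only
      refine (hf.comp ((continuous_id.min continuous_const).continuousOn) ?_) τ hτ
      intro τ' hτ'
      exact hminI τ' hτ' i
    have hne0 := hFne τ hτ j
    have hratio : ContinuousWithinAt (fun τ' => F τ' (j+1) / F τ' j) (Icc 0 1) τ :=
      (hcmin (j+1)).div (hcmin j) hne0
    have hslit := (ratio_slit hne0 (hclose τ hτ j)).1
    exact hratio.clog hslit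
  · intro τ hτ
    rw [hL]
    simp only
    rw [Complex.exp_add, Complex.exp_sum]
    rw [Finset.prod_congr rfl
      (fun j _ => Complex.exp_log (div_ne_zero (hFne τ hτ (j+1)) (hFne τ hτ j)))]
    rw [prod_telescope (F τ) n (fun j _ => hFne τ hτ j)]
    rw [Complex.exp_log (hne 0 h0I)]
    have hFn : F τ n = f τ := by
      rw [hF]; simp only; rw [div_self hnpos.ne', min_eq_left hτ.2]
    have hF0 : F τ 0 = f 0 := by
      rw [hF]; simp only
      norm_num
      rw [min_eq_right hτ.1]
    rw [hFn, hF0, mul_comm, div_mul_cancel₀ _ (hne 0 h0I)]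

lemma exists_log_ratio (G : ℝ × ℝ → ℂ)
    (hG : ContinuousOn G ((Icc (0:ℝ) 1) ×ˢ (Icc (0:ℝ) 1)))
    (hne : ∀ p ∈ (Icc (0:ℝ) 1) ×ˢ (Icc (0:ℝ) 1), G p ≠ 0)
    (hper : ∀ s ∈ Icc (0:ℝ) 1, G (0, s) = G (1, s)) :
    ∃ h : ℝ → ℂ, ContinuousOn h (Icc 0 1) ∧ h 0 = h 1 ∧
      ∀ τ ∈ Icc (0:ℝ) 1, Complex.exp (h τ) = G (τ, 1) / G (τ, 0) := by
  have hK : IsCompact ((Icc (0:ℝ) 1) ×ˢ (Icc (0:ℝ) 1)) := isCompact_Icc.prod isCompact_Icc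
  have h0I : (0:ℝ) ∈ Icc (0:ℝ) 1 := left_mem_Icc.2 zero_le_one
  have h1I : (1:ℝ) ∈ Icc (0:ℝ) 1 := right_mem_Icc.2 zero_le_one
  obtain ⟨p₀, hp₀K, hp₀'⟩ := hK.exists_isMinOn ⟨(0,0), ⟨h0I, h0I⟩⟩
    (continuous_norm.comp_continuousOn hG)
  set ε : ℝ := ‖G p₀‖ with hε
  have hp₀ : ∀ p ∈ (Icc (0:ℝ) 1) ×ˢ (Icc (0:ℝ) 1), ε ≤ ‖G p‖ :=
    fun p hp => hp₀' hp
  have hεpos : 0 < ε := norm_pos_iff.mpr (hne p₀ hp₀K)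
  obtain ⟨δ, hδpos, hδ⟩ := Metric.uniformContinuousOn_iff.1
    (hK.uniformContinuousOn_of_continuous hG) ε hεpos
  obtain ⟨n', hn'⟩ := exists_nat_one_div_lt hδpos
  obtain ⟨n, hnpos, hmesh⟩ : ∃ n : ℕ, 0 < (n:ℝ) ∧ 1 / (n:ℝ) < δ :=
    ⟨n' + 1, by positivity, by exact_mod_cast hn'⟩
  set F : ℝ → ℕ → ℂ := fun τ j => G (τ, (j:ℝ)/n) with hF
  have hsI : ∀ j : ℕ, j ≤ n → ((j:ℝ)/n) ∈ Icc (0:ℝ) 1 := by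
    intro j hj
    refine ⟨by positivity, ?_⟩
    rw [div_le_one hnpos]
    exact_mod_cast hj
  have hKmem : ∀ τ ∈ Icc (0:ℝ) 1, ∀ j : ℕ, j ≤ n →
      (τ, (j:ℝ)/n) ∈ (Icc (0:ℝ) 1) ×ˢ (Icc (0:ℝ) 1) :=
    fun τ hτ j hj => ⟨hτ, hsI j hj⟩
  have hFne : ∀ τ ∈ Icc (0:ℝ) 1, ∀ j : ℕ, j ≤ n → F τ j ≠ 0 :=
    fun τ hτ j hj => hne _ (hKmem τ hτ j hj)
  have hclose : ∀ τ ∈ Icc (0:ℝ) 1, ∀ j : ℕ, j < n →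
      ‖F τ (j+1) - F τ j‖ < ‖F τ j‖ := by
    intro τ hτ j hj
    have hd : dist ((τ, ((j:ℝ)+1)/n)) ((τ, (j:ℝ)/n)) < δ := by
      rw [Prod.dist_eq]
      have h1 : dist τ τ = 0 := dist_self τ
      have h2 : dist (((j:ℝ)+1)/n) ((j:ℝ)/n) = 1/n := by
        rw [Real.dist_eq, show ((j:ℝ)+1)/n - (j:ℝ)/n = 1/n by field_simp; ring]
        rw [abs_of_pos (by positivity)]
      rw [h1, h2]
      rw [max_eq_right (by positivity : (0:ℝ) ≤ 1/(n:ℝ))]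
      exact hmesh
    have hmem1 := hKmem τ hτ j hj.le
    have hmem2 : (τ, ((j:ℝ)+1)/n) ∈ (Icc (0:ℝ) 1) ×ˢ (Icc (0:ℝ) 1) := by
      have h5 := hKmem τ hτ (j+1) hj
      push_cast at h5
      exact h5
    have hdist := hδ _ hmem2 _ hmem1 hd
    have h6 : ‖G (τ, ((j:ℝ)+1)/n) - G (τ, (j:ℝ)/n)‖ < ε := by
      rw [← Complex.dist_eq]; exact hdist
    have h7 := hp₀ _ hmem1
    rw [hF]
    simp only
    push_cast
    linarith
  set h : ℝ → ℂ := fun τ => ∑ j ∈ Finset.range n, Complex.log (F τ (j+1) / F τ j) with hh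
  refine ⟨h, ?_, ?_, ?_⟩
  · apply continuousOn_finset_sum
    intro j hj
    rw [Finset.mem_range] at hj
    intro τ hτ
    have hcF : ∀ i : ℕ, i ≤ n → ContinuousWithinAt (fun τ' => F τ' i) (Icc 0 1) τ := by
      intro i hi
      rw [hF]
      simp only
      refine (hG.comp ((continuous_id.prodMk continuous_const).continuousOn) ?_) τ hτ
      intro τ' hτ'
      exact ⟨hτ', hsI i hi⟩
    have hne0 := hFne τ hτ j hj.le
    have hratio : ContinuousWithinAt (fun τ' => F τ' (j+1) / F τ' j) (Icc 0 1) τ :=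
      (hcF (j+1) hj).div (hcF j hj.le) hne0
    have hslit := (ratio_slit hne0 (hclose τ hτ j hj)).1
    exact hratio.clog hslit
  · rw [hh]
    simp only
    apply Finset.sum_congr rfl
    intro j hj
    rw [Finset.mem_range] at hj
    rw [hF]
    simp only
    rw [hper _ (hsI j hj.le), hper _ (hsI (j+1) hj)]
  · intro τ hτ
    rw [hh]
    simp only
    rw [Complex.exp_sum]
    rw [Finset.prod_congr rfl (fun j hj => Complex.exp_log
      (div_ne_zero (hFne τ hτ (j+1) (Finset.mem_range.1 hj))
        (hFne τ hτ j (Finset.mem_range.1 hj).le)))]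
    rw [prod_telescope (F τ) n (fun j hj => hFne τ hτ j hj)]
    have hFn : F τ n = G (τ, 1) := by
      rw [hF]; simp only; rw [div_self hnpos.ne']
    have hF0 : F τ 0 = G (τ, 0) := by
      rw [hF]; simp only; norm_num
    rw [hFn, hF0]

end ZeroWindAux

/-- for a continuous loop `S : [0,1] → GL_m(ℂ)`, if `m` does not
divide the winding number of `det S` about the origin (witnessed by a continuous
argument `φ` with `det S(τ) = |det S(τ)| e^{2πi φ(τ)}` and winding number
`w = φ(1) - φ(0) ∈ ℤ`), then `0 ∈ W(S(τ₀))` for some `τ₀ ∈ [0,1]`. -/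
theorem zero_mem_numRange_of_winding_not_dvd {m : ℕ} (hm : 1 ≤ m)
    (S : ℝ → Matrix (Fin m) (Fin m) ℂ)
    (hS : ContinuousOn S (Icc 0 1)) (hloop : S 0 = S 1)
    (hinv : ∀ τ ∈ Icc (0:ℝ) 1, IsUnit (S τ).det)
    (φ : ℝ → ℝ) (hφ : ContinuousOn φ (Icc 0 1))
    (harg : ∀ τ ∈ Icc (0:ℝ) 1,
      (S τ).det = (‖(S τ).det‖ : ℂ) *
        Complex.exp (2 * Real.pi * Complex.I * (φ τ)))
    (w : ℤ) (hw : φ 1 - φ 0 = w) (hndvd : ¬ (m : ℤ) ∣ w) :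
    ∃ τ₀ ∈ Icc (0:ℝ) 1, (0 : ℂ) ∈ numRange (S τ₀) := by
  classical
  by_contra hcon
  push_neg at hcon
  have h0I : (0:ℝ) ∈ Icc (0:ℝ) 1 := left_mem_Icc.2 zero_le_one
  have h1I : (1:ℝ) ∈ Icc (0:ℝ) 1 := right_mem_Icc.2 zero_le_one
  set i₀ : Fin m := ⟨0, hm⟩ with hi₀
  set x₀ : Fin m → ℂ := Pi.single i₀ 1 with hx₀
  have hx₀star : star x₀ = x₀ := by
    funext i
    simp [hx₀, Pi.single_apply, apply_ite]
  have hx₀1 : star x₀ ⬝ᵥ x₀ = 1 := by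
    rw [hx₀star, hx₀, single_dotProduct]
    simp [Pi.single_apply]
  have hx₀M : ∀ M : Matrix (Fin m) (Fin m) ℂ, star x₀ ⬝ᵥ M.mulVec x₀ = M i₀ i₀ := by
    intro M
    rw [hx₀star, hx₀, Matrix.mulVec_single, single_dotProduct]
    simp
  set c : ℝ → ℂ := fun τ => S τ i₀ i₀ with hc
  have hcmem : ∀ τ : ℝ, c τ ∈ numRange (S τ) := fun τ => ⟨x₀, hx₀1, hx₀M (S τ)⟩
  set G : ℝ × ℝ → ℂ := fun p =>
    ((1 - (p.2:ℂ)) • S p.1 + ((p.2:ℂ) * c p.1) • (1 : Matrix (Fin m) (Fin m) ℂ)).det with hG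
  have hentry : ∀ i j, ContinuousOn (fun τ => S τ i j) (Icc (0:ℝ) 1) := by
    intro i j
    exact (continuous_apply j).comp_continuousOn ((continuous_apply i).comp_continuousOn hS)
  have hccont : ContinuousOn c (Icc (0:ℝ) 1) := hentry i₀ i₀
  have hmat : ContinuousOn (fun p : ℝ × ℝ =>
      (1 - (p.2:ℂ)) • S p.1 + ((p.2:ℂ) * c p.1) • (1 : Matrix (Fin m) (Fin m) ℂ))
      ((Icc (0:ℝ) 1) ×ˢ (Icc (0:ℝ) 1)) := by
    apply continuousOn_pi.2
    intro i
    apply continuousOn_pi.2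
    intro j
    simp only [Matrix.add_apply, Matrix.smul_apply, smul_eq_mul]
    have hfst : ContinuousOn (fun p : ℝ×ℝ => S p.1 i j) ((Icc (0:ℝ) 1) ×ˢ (Icc (0:ℝ) 1)) :=
      (hentry i j).comp continuous_fst.continuousOn (fun p hp => hp.1)
    have hcfst : ContinuousOn (fun p : ℝ×ℝ => c p.1) ((Icc (0:ℝ) 1) ×ˢ (Icc (0:ℝ) 1)) :=
      hccont.comp continuous_fst.continuousOn (fun p hp => hp.1)
    have hsnd : ContinuousOn (fun p : ℝ×ℝ => ((p.2 : ℝ):ℂ)) ((Icc (0:ℝ) 1) ×ˢ (Icc (0:ℝ) 1)) :=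
      (Complex.continuous_ofReal.comp continuous_snd).continuousOn
    exact ((continuousOn_const.sub hsnd).mul hfst).add
      ((hsnd.mul hcfst).mul continuousOn_const)
  have hGcont : ContinuousOn G ((Icc (0:ℝ) 1) ×ˢ (Icc (0:ℝ) 1)) :=
    (Continuous.matrix_det continuous_id).comp_continuousOn hmat
  have hGne : ∀ p ∈ (Icc (0:ℝ) 1) ×ˢ (Icc (0:ℝ) 1), G p ≠ 0 := by
    rintro ⟨τ, s⟩ hp hdet0
    have hτI : τ ∈ Icc (0:ℝ) 1 := hp.1
    have hsI : s ∈ Icc (0:ℝ) 1 := hp.2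
    rw [hG] at hdet0
    simp only at hdet0
    obtain ⟨v, hv0, hveq⟩ := Matrix.exists_mulVec_eq_zero_iff.2 hdet0
    obtain ⟨r, hr0, hreq, hrz⟩ := ZeroWindAux.stardot_nonneg_real v
    have hrpos : 0 < r := lt_of_le_of_ne hr0 (fun h => hv0 (hrz h.symm))
    set a : ℂ := (((Real.sqrt r)⁻¹ : ℝ) : ℂ) with ha
    set u : Fin m → ℂ := a • v with hudef
    have hrr : (Real.sqrt r)⁻¹ * (Real.sqrt r)⁻¹ * r = 1 := by
      rw [← mul_inv, Real.mul_self_sqrt hr0]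
      exact inv_mul_cancel₀ hrpos.ne'
    have hu1 : star u ⬝ᵥ u = 1 := by
      rw [hudef, ZeroWindAux.smul_stardot_self, hreq, ha, Complex.conj_ofReal,
        ← Complex.ofReal_mul, ← Complex.ofReal_mul]
      exact_mod_cast congrArg (Complex.ofReal) hrr
    set z : ℂ := star u ⬝ᵥ (S τ).mulVec u with hz
    have hzmem : z ∈ numRange (S τ) := ⟨u, hu1, rfl⟩
    have hMu0 : ((1 - (s:ℂ)) • S τ + ((s:ℂ) * c τ) • (1 : Matrix (Fin m) (Fin m) ℂ)).mulVec u
        = 0 := by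
      rw [hudef, Matrix.mulVec_smul, hveq, smul_zero]
    have h9 : star u ⬝ᵥ (((1 - (s:ℂ)) • S τ
        + ((s:ℂ) * c τ) • (1 : Matrix (Fin m) (Fin m) ℂ)).mulVec u) = 0 := by
      rw [hMu0, dotProduct_zero]
    rw [Matrix.add_mulVec, dotProduct_add, Matrix.smul_mulVec,
      dotProduct_smul, Matrix.smul_mulVec, Matrix.one_mulVec,
      dotProduct_smul, hu1] at h9
    have hcomb : (1 - (s:ℂ)) * z + (s:ℂ) * c τ = 0 := by
      simp only [smul_eq_mul, mul_one] at h9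
      rw [← hz] at h9
      exact h9
    exact hcon τ hτI (ZeroWindAux.segment_zero (S τ) hzmem (hcmem τ) hsI hcomb)
  have hcper : c 0 = c 1 := by rw [hc]; simp only; rw [hloop]
  have hGper : ∀ s ∈ Icc (0:ℝ) 1, G (0, s) = G (1, s) := by
    intro s _
    rw [hG]
    simp only
    rw [hloop, hcper]
  obtain ⟨h, hhcont, hh01, hhexp⟩ := ZeroWindAux.exists_log_ratio G hGcont hGne hGper
  have hcne : ∀ τ ∈ Icc (0:ℝ) 1, c τ ≠ 0 := by
    intro τ hτ h0
    exact hcon τ hτ (h0 ▸ hcmem τ)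
  obtain ⟨l, hlcont, hlexp⟩ := ZeroWindAux.exists_log_path c hccont hcne
  have hdetne : ∀ τ ∈ Icc (0:ℝ) 1, (S τ).det ≠ 0 :=
    fun τ hτ => isUnit_iff_ne_zero.1 (hinv τ hτ)
  have hGτ1 : ∀ τ : ℝ, G (τ, 1) = (c τ)^m := by
    intro τ
    rw [hG]
    simp [Matrix.det_smul, Matrix.det_one, Fintype.card_fin]
  have hGτ0 : ∀ τ : ℝ, G (τ, 0) = (S τ).det := by
    intro τ
    rw [hG]
    simp
  set E : ℝ → ℂ := fun τ => h τ + ((Real.log (‖(S τ).det‖) : ℝ) : ℂ)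
      + 2 * Real.pi * Complex.I * (φ τ) - (m:ℂ) * l τ with hE
  have hEcont : ContinuousOn E (Icc (0:ℝ) 1) := by
    have hdc : ContinuousOn (fun τ => (S τ).det) (Icc (0:ℝ) 1) :=
      (Continuous.matrix_det continuous_id).comp_continuousOn hS
    have habs : ContinuousOn (fun τ => ‖(S τ).det‖) (Icc (0:ℝ) 1) :=
      continuous_norm.comp_continuousOn hdc
    have hlog : ContinuousOn (fun τ => Real.log (‖(S τ).det‖)) (Icc (0:ℝ) 1) := by
      intro τ hτ
      exact (habs τ hτ).log (norm_ne_zero_iff.mpr (hdetne τ hτ))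
    exact ((hhcont.add (Complex.continuous_ofReal.comp_continuousOn hlog)).add
      (continuousOn_const.mul (Complex.continuous_ofReal.comp_continuousOn hφ))).sub
      (continuousOn_const.mul hlcont)
  have hEexp : ∀ τ ∈ Icc (0:ℝ) 1, Complex.exp (E τ) = 1 := by
    intro τ hτ
    rw [hE]
    simp only
    rw [Complex.exp_sub, Complex.exp_add, Complex.exp_add]
    rw [hhexp τ hτ, hGτ1 τ, hGτ0 τ]
    rw [show ((m:ℂ)) * l τ = ((m:ℕ):ℂ) * l τ by norm_cast, Complex.exp_nat_mul, hlexp τ hτ]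
    rw [← Complex.ofReal_exp, Real.exp_log (norm_pos_iff.mpr (hdetne τ hτ))]
    have hd := harg τ hτ
    have hXne : Complex.exp (2 * Real.pi * Complex.I * (φ τ)) ≠ 0 := Complex.exp_ne_zero _
    have habsne : ((‖(S τ).det‖ : ℝ) : ℂ) ≠ 0 :=
      Complex.ofReal_ne_zero.2 (norm_ne_zero_iff.mpr (hdetne τ hτ))
    rw [div_eq_iff (pow_ne_zero m (hcne τ hτ)), one_mul, div_mul_eq_mul_div,
      div_mul_eq_mul_div, div_eq_iff (hdetne τ hτ)]
    linear_combination (-(c τ ^ m)) * hd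
  have hE10 := ZeroWindAux.endpoint_eq E hEcont hEexp
  have hA : ((Real.log (‖(S 1).det‖) : ℝ) : ℂ)
      = ((Real.log (‖(S 0).det‖) : ℝ) : ℂ) := by rw [hloop]
  have hφw : ((φ 1 : ℝ) : ℂ) - ((φ 0 : ℝ) : ℂ) = (w:ℂ) := by
    rw [← Complex.ofReal_sub, hw]
    push_cast
    rfl
  have hml : (m:ℂ) * (l 1 - l 0) = (w:ℂ) * (2 * Real.pi * Complex.I) := by
    have e := hE10
    rw [hE] at e
    simp only at e
    linear_combination (-1:ℂ) * e - hh01 + hA + (2 * Real.pi * Complex.I) * hφw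
  have hexpdiff : Complex.exp (l 1 - l 0) = 1 := by
    rw [Complex.exp_sub, hlexp 1 h1I, hlexp 0 h0I, ← hcper]
    exact div_self (hcne 0 h0I)
  obtain ⟨k, hk⟩ := Complex.exp_eq_one_iff.1 hexpdiff
  rw [hk] at hml
  have h2πI : (2 * (Real.pi:ℂ) * Complex.I) ≠ 0 := Complex.two_pi_I_ne_zero
  have hmk : (m:ℂ) * k = (w:ℂ) := mul_right_cancel₀ h2πI (by linear_combination hml)
  have hzw : (m:ℤ) * k = w := by exact_mod_cast hmk
  exact hndvd ⟨k, hzw.symm⟩
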